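/- arXiv:math/0208244 — 6 statements merged into one kernel-verified Lean document; each statement's English description precedes it below -/
import Mathlib

section
/- Let f, g, h, P, R, S ∈ ℂ[x] satisfy S·P = f·(R·R'' − (R')²) + g·R·R' + h·R². Then, modulo the ideal generated by R in ℂ[x], S⁴·( f·(P·P'' − (P')²) + g·P·P' + h·P² ) ≡ (R')⁴·f·( S²·( f·f'' − (f')² + 3f'·g − 2f·g' − 2g² ) − f·( f·(S·S'' − (S')²) + g·S·S' + h·S² ) ). -/
open Polynomial

set_option maxHeartbeats 4000000 in
/-- key congruence in the proof of Theorem 1. If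
`S·P = f·(R·R'' − (R')²) + g·R·R' + h·R²`, then modulo `R`:
`S⁴·(f·(P·P'' − (P')²) + g·P·P' + h·P²) ≡
  (R')⁴·f·(S²·(f·f'' − (f')² + 3f'·g − 2f·g' − 2g²)
    − f·(f·(S·S'' − (S')²) + g·S·S' + h·S²))`. -/
theorem stmt_2 (f g h P R S : Polynomial ℂ)
    (hrec : S * P = f * (R * derivative (derivative R) - (derivative R) ^ 2)
      + g * R * derivative R + h * R ^ 2) :
    R ∣ S ^ 4 * (f * (P * derivative (derivative P) - (derivative P) ^ 2)
        + g * P * derivative P + h * P ^ 2) -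
      (derivative R) ^ 4 * f *
        (S ^ 2 * (f * derivative (derivative f) - (derivative f) ^ 2
            + 3 * derivative f * g - 2 * f * derivative g - 2 * g ^ 2)
          - f * (f * (S * derivative (derivative S) - (derivative S) ^ 2)
              + g * S * derivative S + h * S ^ 2)) := by
  have h1 : derivative S * P + S * derivative P = ((derivative h)*R^2 + 2*h*R*(derivative R) + (derivative g)*R*(derivative R) + g*(derivative R)^2 + g*R*(derivative (derivative R)) - (derivative f)*(derivative R)^2 + (derivative f)*R*(derivative (derivative R)) - f*(derivative R)*(derivative (derivative R)) + f*R*(derivative (derivative (derivative R)))) := by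
    have t := congrArg derivative hrec
    simp only [pow_two, derivative_mul, derivative_add, derivative_sub] at t
    linear_combination t
  have h2 : derivative (derivative S) * P + 2 * derivative S * derivative P
      + S * derivative (derivative P) = ((derivative (derivative h))*R^2 + 4*(derivative h)*R*(derivative R) + 2*h*(derivative R)^2 + 2*h*R*(derivative (derivative R)) + (derivative (derivative g))*R*(derivative R) + 2*(derivative g)*(derivative R)^2 + 2*(derivative g)*R*(derivative (derivative R)) + 3*g*(derivative R)*(derivative (derivative R)) + g*R*(derivative (derivative (derivative R))) - (derivative (derivative f))*(derivative R)^2 + (derivative (derivative f))*R*(derivative (derivative R)) - 2*(derivative f)*(derivative R)*(derivative (derivative R)) + 2*(derivative f)*R*(derivative (derivative (derivative R))) - f*(derivative (derivative R))^2 + f*R*(derivative (derivative (derivative (derivative R))))) := by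
    have t := congrArg derivative (congrArg derivative hrec)
    simp only [pow_two, derivative_mul, derivative_add, derivative_sub] at t
    linear_combination t
  refine ⟨(h^3*S^2*R^3 + g*h*(derivative h)*S^2*R^3 - g*h^2*S*(derivative S)*R^3 + 4*g*h^2*S^2*R^2*(derivative R) + g*(derivative g)*h*S^2*R^2*(derivative R) + g^2*(derivative h)*S^2*R^2*(derivative R) - 2*g^2*h*S*(derivative S)*R^2*(derivative R) + 4*g^2*h*S^2*R*(derivative R)^2 + g^2*h*S^2*R^2*(derivative (derivative R)) + g^2*(derivative g)*S^2*R*(derivative R)^2 - g^3*S*(derivative S)*R*(derivative R)^2 + g^3*S^2*(derivative R)^3 + g^3*S^2*R*(derivative R)*(derivative (derivative R)) - (derivative f)*g*h*S^2*R*(derivative R)^2 + (derivative f)*g*h*S^2*R^2*(derivative (derivative R)) - (derivative f)*g^2*S^2*(derivative R)^3 + (derivative f)*g^2*S^2*R*(derivative R)*(derivative (derivative R)) - f*(derivative h)^2*S^2*R^3 + f*h*(derivative (derivative h))*S^2*R^3 + f*h^2*(derivative S)^2*R^3 - f*h^2*S*(derivative (derivative S))*R^3 - 4*f*h^2*S^2*R*(derivative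 R)^2 + 4*f*h^2*S^2*R^2*(derivative (derivative R)) + f*(derivative (derivative g))*h*S^2*R^2*(derivative R) - 2*f*(derivative g)*(derivative h)*S^2*R^2*(derivative R) - 2*f*(derivative g)*h*S^2*R*(derivative R)^2 + 2*f*(derivative g)*h*S^2*R^2*(derivative (derivative R)) - f*(derivative g)^2*S^2*R*(derivative R)^2 + f*g*(derivative (derivative h))*S^2*R^2*(derivative R) + f*g*(derivative h)*S^2*R*(derivative R)^2 - f*g*(derivative h)*S^2*R^2*(derivative (derivative R)) + 2*f*g*h*(derivative S)^2*R^2*(derivative R) - 2*f*g*h*S*(derivative (derivative S))*R^2*(derivative R) + 2*f*g*h*S*(derivative S)*R*(derivative R)^2 - 2*f*g*h*S*(derivative S)*R^2*(derivative (derivative R)) - 6*f*g*h*S^2*(derivative R)^3 + 4*f*g*h*S^2*R*(derivative R)*(derivative (derivative R)) + 2*f*g*h*S^2*R^2*(derivative (derivative (derivative R))) + f*g*(derivative (derivative g))*S^2*R*(derivative R)^2 - f*g*(derivative g)*S^2*(derivative R)^3 + f*g*(derivative g)*S^2*R*(derivative R)*(derivative (derivative R)) + f*g^2*(derivative S)^2*R*(derivative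 R)^2 - f*g^2*S*(derivative (derivative S))*R*(derivative R)^2 + 2*f*g^2*S*(derivative S)*(derivative R)^3 - 2*f*g^2*S*(derivative S)*R*(derivative R)*(derivative (derivative R)) + 2*f*g^2*S^2*R*(derivative R)*(derivative (derivative (derivative R))) - f*(derivative (derivative f))*h*S^2*R*(derivative R)^2 + f*(derivative (derivative f))*h*S^2*R^2*(derivative (derivative R)) - f*(derivative (derivative f))*g*S^2*(derivative R)^3 + f*(derivative (derivative f))*g*S^2*R*(derivative R)*(derivative (derivative R)) + 2*f*(derivative f)*(derivative h)*S^2*R*(derivative R)^2 - 2*f*(derivative f)*(derivative h)*S^2*R^2*(derivative (derivative R)) + 4*f*(derivative f)*h*S^2*(derivative R)^3 - 6*f*(derivative f)*h*S^2*R*(derivative R)*(derivative (derivative R)) + 2*f*(derivative f)*h*S^2*R^2*(derivative (derivative (derivative R))) + 2*f*(derivative f)*(derivative g)*S^2*(derivative R)^3 - 2*f*(derivative f)*(derivative g)*S^2*R*(derivative R)*(derivative (derivative R)) - 4*f*(derivative f)*g*S^2*(derivative R)^2*(derivative (derivative R)) - f*(derivative f)*g*S^2*R*(derivative (derivative R))^2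 + 2*f*(derivative f)*g*S^2*R*(derivative R)*(derivative (derivative (derivative R))) + 2*f*(derivative f)^2*S^2*(derivative R)^2*(derivative (derivative R)) - f*(derivative f)^2*S^2*R*(derivative (derivative R))^2 - f^2*(derivative (derivative h))*S^2*R*(derivative R)^2 + f^2*(derivative (derivative h))*S^2*R^2*(derivative (derivative R)) - 4*f^2*(derivative h)*S^2*(derivative R)^3 + 6*f^2*(derivative h)*S^2*R*(derivative R)*(derivative (derivative R)) - 2*f^2*(derivative h)*S^2*R^2*(derivative (derivative (derivative R))) - 2*f^2*h*(derivative S)^2*R*(derivative R)^2 + 2*f^2*h*(derivative S)^2*R^2*(derivative (derivative R)) + 2*f^2*h*S*(derivative (derivative S))*R*(derivative R)^2 - 2*f^2*h*S*(derivative (derivative S))*R^2*(derivative (derivative R)) + 2*f^2*h*S^2*(derivative R)^2*(derivative (derivative R)) + 2*f^2*h*S^2*R*(derivative (derivative R))^2 - 4*f^2*h*S^2*R*(derivative R)*(derivative (derivative (derivative R))) + f^2*h*S^2*R^2*(derivative (derivative (derivative (derivative R)))) - f^2*(derivative (derivative g))*S^2*(derivative R)^3 + f^2*(derivative (derivative g))*S^2*R*(derivative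 R)*(derivative (derivative R)) + 2*f^2*(derivative g)*S^2*(derivative R)^2*(derivative (derivative R)) + 2*f^2*(derivative g)*S^2*R*(derivative (derivative R))^2 - 2*f^2*(derivative g)*S^2*R*(derivative R)*(derivative (derivative (derivative R))) - 2*f^2*g*(derivative S)^2*(derivative R)^3 + 2*f^2*g*(derivative S)^2*R*(derivative R)*(derivative (derivative R)) + 2*f^2*g*S*(derivative (derivative S))*(derivative R)^3 - 2*f^2*g*S*(derivative (derivative S))*R*(derivative R)*(derivative (derivative R)) + 2*f^2*g*S*(derivative S)*(derivative R)^2*(derivative (derivative R)) - f^2*g*S*(derivative S)*R*(derivative (derivative R))^2 + 3*f^2*g*S^2*(derivative R)*(derivative (derivative R))^2 - 4*f^2*g*S^2*(derivative R)^2*(derivative (derivative (derivative R))) + f^2*g*S^2*R*(derivative R)*(derivative (derivative (derivative (derivative R)))) - 2*f^2*(derivative (derivative f))*S^2*(derivative R)^2*(derivative (derivative R)) + f^2*(derivative (derivative f))*S^2*R*(derivative (derivative R))^2 - 2*f^3*(derivative S)^2*(derivative R)^2*(derivative (derivative R)) + f^3*(derivative S)^2*R*(derivative (derivative R))^2 +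 2*f^3*S*(derivative (derivative S))*(derivative R)^2*(derivative (derivative R)) - f^3*S*(derivative (derivative S))*R*(derivative (derivative R))^2 - f^3*S^2*(derivative (derivative R))^3 + 2*f^3*S^2*(derivative R)*(derivative (derivative R))*(derivative (derivative (derivative R))) - f^3*S^2*(derivative R)^2*(derivative (derivative (derivative (derivative R)))) - f^3*S^2*R*(derivative (derivative (derivative R)))^2 + f^3*S^2*R*(derivative (derivative R))*(derivative (derivative (derivative (derivative R))))), ?_⟩
  linear_combination (h*S^3*P + h^2*S^2*R^2 - g*S^2*(derivative S)*P + g*(derivative h)*S^2*R^2 - g*h*S*(derivative S)*R^2 + 3*g*h*S^2*R*(derivative R) + g*(derivative g)*S^2*R*(derivative R) - g^2*S*(derivative S)*R*(derivative R) + g^2*S^2*(derivative R)^2 + g^2*S^2*R*(derivative (derivative R)) - (derivative f)*g*S^2*(derivative R)^2 + (derivative f)*g*S^2*R*(derivative (derivative R)) + f*S*(derivative S)^2*P - f*S^2*(derivative (derivative S))*P + f*(derivative (derivative h))*S^2*R^2 + 4*f*(derivative h)*S^2*R*(derivative R) + f*h*(derivative S)^2*R^2 - f*h*S*(derivative (derivative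 S))*R^2 + f*h*S^2*(derivative R)^2 + 3*f*h*S^2*R*(derivative (derivative R)) + f*(derivative (derivative g))*S^2*R*(derivative R) + 2*f*(derivative g)*S^2*(derivative R)^2 + 2*f*(derivative g)*S^2*R*(derivative (derivative R)) + f*g*(derivative S)^2*R*(derivative R) - f*g*S*(derivative (derivative S))*R*(derivative R) + f*g*S*(derivative S)*(derivative R)^2 - f*g*S*(derivative S)*R*(derivative (derivative R)) + 2*f*g*S^2*(derivative R)*(derivative (derivative R)) + 2*f*g*S^2*R*(derivative (derivative (derivative R))) - f*(derivative (derivative f))*S^2*(derivative R)^2 + f*(derivative (derivative f))*S^2*R*(derivative (derivative R)) - 2*f*(derivative f)*S^2*(derivative R)*(derivative (derivative R)) + 2*f*(derivative f)*S^2*R*(derivative (derivative (derivative R))) - f^2*(derivative S)^2*(derivative R)^2 + f^2*(derivative S)^2*R*(derivative (derivative R)) + f^2*S*(derivative (derivative S))*(derivative R)^2 - f^2*S*(derivative (derivative S))*R*(derivative (derivative R)) - f^2*S^2*(derivative (derivative R))^2 + f^2*S^2*R*(derivative (derivative (derivative (derivative R))))) * hrec + (g*S^3*P - f*S^2*(derivative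 S)*P - f*S^3*(derivative P) - f*(derivative h)*S^2*R^2 - 2*f*h*S^2*R*(derivative R) - f*(derivative g)*S^2*R*(derivative R) - f*g*S^2*(derivative R)^2 - f*g*S^2*R*(derivative (derivative R)) + f*(derivative f)*S^2*(derivative R)^2 - f*(derivative f)*S^2*R*(derivative (derivative R)) + f^2*S^2*(derivative R)*(derivative (derivative R)) - f^2*S^2*R*(derivative (derivative (derivative R)))) * h1 + (f*S^3*P) * h2
end

section
/- Let f, g, h, P, R, S ∈ ℂ[x] satisfy S·P = f·(R·R'' − (R')²) + g·R·R' + h·R². Then S²·P' ≡ (R')²·( S'·f − S·f' + S·g ) − R'·R''·S·f modulo R. -/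
open Polynomial

/-- If `S·P = f·(R·R'' − (R')²) + g·R·R' + h·R²`, then
`S²·P' ≡ (R')²·(S'·f − S·f' + S·g) − R'·R''·S·f` modulo `R`. -/
theorem stmt_3 (f g h P R S : Polynomial ℂ)
    (hrec : S * P = f * (R * derivative (derivative R) - (derivative R) ^ 2)
      + g * R * derivative R + h * R ^ 2) :
    R ∣ S ^ 2 * derivative P -
      ((derivative R) ^ 2 * (derivative S * f - S * derivative f + S * g)
        - derivative R * derivative (derivative R) * S * f) := by
  have E2 := congrArg derivative hrec
  simp only [derivative_mul, derivative_sub, derivative_add, derivative_pow,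
    Nat.cast_ofNat, Nat.sub_self, pow_one, pow_zero, one_mul, mul_one,
    Nat.add_sub_cancel, map_ofNat] at E2
  refine ⟨S * derivative f * derivative (derivative R)
    + S * f * derivative (derivative (derivative R))
    + S * derivative g * derivative R + S * g * derivative (derivative R)
    + S * derivative h * R + 2 * S * h * derivative R
    - derivative S * f * derivative (derivative R)
    - derivative S * g * derivative R - derivative S * h * R, ?_⟩
  linear_combination S * E2 - derivative S * hrec
end

section
/- Let f, g, h, P, R, S ∈ ℂ[x] satisfy S·P = f·(R·R'' − (R')²) + g·R·R' + h·R². Then S³·P'' ≡ (R')²·( S²·(−f'' + 2g' + 2h) − 2(S')²·f + S·S'·(2f' − 2g) + S·S''·f ) + R'·R''·( S²·(−2f' + 3g) + 2S·S'·f ) + (R'')²·( −S²·f ) modulo R. -/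
open Polynomial

/-- If `S·P = f·(R·R'' − (R')²) + g·R·R' + h·R²`, then
`S³·P'' ≡ (R')²·(S²·(−f'' + 2g' + 2h) − 2·(S')²·f + S·S'·(2f' − 2g) + S·S''·f)
  + R'·R''·(S²·(−2f' + 3g) + 2·S·S'·f) + (R'')²·(−S²·f)` modulo `R`. -/
theorem stmt_4 (f g h P R S : Polynomial ℂ)
    (hrec : S * P = f * (R * derivative (derivative R) - (derivative R) ^ 2)
      + g * R * derivative R + h * R ^ 2) :
    R ∣ S ^ 3 * derivative (derivative P) -
      ((derivative R) ^ 2 *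
          (S ^ 2 * (-derivative (derivative f) + 2 * derivative g + 2 * h)
            - 2 * (derivative S) ^ 2 * f
            + S * derivative S * (2 * derivative f - 2 * g)
            + S * derivative (derivative S) * f)
        + derivative R * derivative (derivative R) *
            (S ^ 2 * (-(2 * derivative f) + 3 * g) + 2 * S * derivative S * f)
        + (derivative (derivative R)) ^ 2 * (-(S ^ 2) * f)) := by
  set f1 := derivative f
  set f2 := derivative f1
  set g1 := derivative g
  set g2 := derivative g1
  set h1 := derivative h
  set h2 := derivative h1
  set R1 := derivative R
  set R2 := derivative R1
  set R3 := derivative R2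
  set R4 := derivative R3
  set S1 := derivative S
  set S2 := derivative S1
  refine ⟨S ^ 2 * (f2 * R2 + 2 * f1 * R3 + f * R4 + g2 * R1 + 2 * g1 * R2 + g * R3
      + h2 * R + 4 * h1 * R1 + 2 * h * R2)
    - 2 * S * S1 * (f1 * R2 + f * R3 + g1 * R1 + g * R2 + h1 * R + 2 * h * R1)
    + (2 * S1 ^ 2 - S * S2) * (f * R2 + g * R1 + h * R), ?_⟩
  have key : S ^ 3 * derivative (derivative P)
      = S ^ 2 * derivative (derivative (S * P))
        - 2 * (S * S1) * derivative (S * P)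
        + (2 * S1 ^ 2 - S * S2) * (S * P) := by
    simp only [derivative_mul, derivative_add, S1, S2]
    ring
  rw [hrec] at key
  simp only [derivative_add, derivative_sub, derivative_mul, derivative_pow,
    Nat.cast_ofNat, map_ofNat, map_one, derivative_C, derivative_ofNat, Nat.reduceSub, Nat.cast_one,
    f1, f2, g1, g2, h1, h2, R1, R2, R3, R4] at key
  rw [key]
  ring
end

section
/- Let f, g, h, P, R, S ∈ ℂ[x] satisfy S·P = f·(R·R'' − (R')²) + g·R·R' + h·R². Then S⁴·( P·P'' − (P')² ) ≡ (R')⁴·( S²·( f·f'' − 2f·g' + 2f'·g − (f')² − 2f·h − g² ) + (S')²·f² − S·S''·f² ) − (R')³·R''·S²·f·g modulo R. -/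
open Polynomial

set_option maxHeartbeats 3200000 in
/-- If `S·P = f·(R·R'' − (R')²) + g·R·R' + h·R²`, then
`S⁴·(P·P'' − (P')²) ≡ (R')⁴·(S²·(f·f'' − 2f·g' + 2f'·g − (f')² − 2f·h − g²)
  + (S')²·f² − S·S''·f²) − (R')³·R''·S²·f·g` modulo `R`. -/
theorem stmt_5 (f g h P R S : Polynomial ℂ)
    (hrec : S * P = f * (R * derivative (derivative R) - (derivative R) ^ 2)
      + g * R * derivative R + h * R ^ 2) :
    R ∣ S ^ 4 * (P * derivative (derivative P) - (derivative P) ^ 2) -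
      ((derivative R) ^ 4 *
          (S ^ 2 * (f * derivative (derivative f) - 2 * f * derivative g
              + 2 * derivative f * g - (derivative f) ^ 2 - 2 * f * h - g ^ 2)
            + (derivative S) ^ 2 * f ^ 2 - S * derivative (derivative S) * f ^ 2)
        - (derivative R) ^ 3 * derivative (derivative R) * S ^ 2 * f * g) := by
  have e1 := congrArg derivative hrec
  have e2 := congrArg derivative e1
  simp only [derivative_mul, derivative_add, derivative_sub, derivative_pow,
    Nat.cast_ofNat, Nat.reduceSub, pow_one, map_ofNat, derivative_ofNat,
    Nat.cast_one, map_one, one_mul] at e1 e2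
  have hU : S ^ 2 * derivative P = ((derivative h)*R^2*S + 2*h*R*(derivative R)*S - h*R^2*(derivative S) + (derivative g)*R*(derivative R)*S + g*(derivative R)^2*S + g*R*(derivative (derivative R))*S - g*R*(derivative R)*(derivative S) - (derivative f)*(derivative R)^2*S + (derivative f)*R*(derivative (derivative R))*S - f*(derivative R)*(derivative (derivative R))*S + f*(derivative R)^2*(derivative S) + f*R*(derivative (derivative (derivative R)))*S - f*R*(derivative (derivative R))*(derivative S)) := by
    linear_combination S * e1 - derivative S * hrec
  have hT : S ^ 3 * derivative (derivative P) = ((derivative (derivative h))*R^2*S^2 + 4*(derivative h)*R*(derivative R)*S^2 + (-2)*(derivative h)*R^2*S*(derivative S) + 2*h*(derivative R)^2*S^2 + 2*h*R*(derivative (derivative R))*S^2 + (-4)*h*R*(derivative R)*S*(derivative S) + 2*h*R^2*(derivative S)^2 - h*R^2*S*(derivative (derivative S)) + (derivative (derivative g))*R*(derivative R)*S^2 + 2*(derivative g)*(derivative R)^2*S^2 + 2*(derivative g)*R*(derivative (derivative R))*S^2 + (-2)*(derivative g)*R*(derivative R)*S*(derivative S) + 3*g*(derivative R)*(derivative (derivative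 R))*S^2 + (-2)*g*(derivative R)^2*S*(derivative S) + g*R*(derivative (derivative (derivative R)))*S^2 + (-2)*g*R*(derivative (derivative R))*S*(derivative S) + 2*g*R*(derivative R)*(derivative S)^2 - g*R*(derivative R)*S*(derivative (derivative S)) - (derivative (derivative f))*(derivative R)^2*S^2 + (derivative (derivative f))*R*(derivative (derivative R))*S^2 + (-2)*(derivative f)*(derivative R)*(derivative (derivative R))*S^2 + 2*(derivative f)*(derivative R)^2*S*(derivative S) + 2*(derivative f)*R*(derivative (derivative (derivative R)))*S^2 + (-2)*(derivative f)*R*(derivative (derivative R))*S*(derivative S) - f*(derivative (derivative R))^2*S^2 + 2*f*(derivative R)*(derivative (derivative R))*S*(derivative S) + (-2)*f*(derivative R)^2*(derivative S)^2 + f*(derivative R)^2*S*(derivative (derivative S)) + f*R*(derivative (derivative (derivative (derivative R))))*S^2 + (-2)*f*R*(derivative (derivative (derivative R)))*S*(derivative S) + 2*f*R*(derivative (derivative R))*(derivative S)^2 - f*R*(derivative (derivative R))*S*(derivative (derivative S))) := by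
    linear_combination S ^ 2 * e2 - S * derivative (derivative S) * hrec
      - 2 * derivative S * hU
  refine ⟨(-(derivative h)^2*R^3*S^2 + h*(derivative (derivative h))*R^3*S^2 + (-2)*h^2*R*(derivative R)^2*S^2 + 2*h^2*R^2*(derivative (derivative R))*S^2 + h^2*R^3*(derivative S)^2 - h^2*R^3*S*(derivative (derivative S)) + (derivative (derivative g))*h*R^2*(derivative R)*S^2 + (-2)*(derivative g)*(derivative h)*R^2*(derivative R)*S^2 + (-2)*(derivative g)*h*R*(derivative R)^2*S^2 + 2*(derivative g)*h*R^2*(derivative (derivative R))*S^2 - (derivative g)^2*R*(derivative R)^2*S^2 + g*(derivative (derivative h))*R^2*(derivative R)*S^2 + 2*g*(derivative h)*R*(derivative R)^2*S^2 + (-2)*g*(derivative h)*R^2*(derivative (derivative R))*S^2 + (-2)*g*h*(derivative R)^3*S^2 + g*h*R*(derivative R)*(derivative (derivative R))*S^2 + g*h*R^2*(derivative (derivative (derivative R)))*S^2 + 2*g*h*R^2*(derivative R)*(derivative S)^2 + (-2)*g*h*R^2*(derivative R)*S*(derivative (derivative S)) + g*(derivative (derivative g))*R*(derivative R)^2*S^2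 + g^2*(derivative R)^2*(derivative (derivative R))*S^2 - g^2*R*(derivative (derivative R))^2*S^2 + g^2*R*(derivative R)*(derivative (derivative (derivative R)))*S^2 + g^2*R*(derivative R)^2*(derivative S)^2 - g^2*R*(derivative R)^2*S*(derivative (derivative S)) - (derivative (derivative f))*h*R*(derivative R)^2*S^2 + (derivative (derivative f))*h*R^2*(derivative (derivative R))*S^2 - (derivative (derivative f))*g*(derivative R)^3*S^2 + (derivative (derivative f))*g*R*(derivative R)*(derivative (derivative R))*S^2 + 2*(derivative f)*(derivative h)*R*(derivative R)^2*S^2 + (-2)*(derivative f)*(derivative h)*R^2*(derivative (derivative R))*S^2 + 4*(derivative f)*h*(derivative R)^3*S^2 + (-6)*(derivative f)*h*R*(derivative R)*(derivative (derivative R))*S^2 + 2*(derivative f)*h*R^2*(derivative (derivative (derivative R)))*S^2 + 2*(derivative f)*(derivative g)*(derivative R)^3*S^2 + (-2)*(derivative f)*(derivative g)*R*(derivative R)*(derivative (derivative R))*S^2 + (-2)*(derivative f)*g*(derivative R)^2*(derivative (derivative R))*S^2 + (-2)*(derivative f)*g*R*(derivative (derivative R))^2*S^2 + 2*(derivative f)*g*R*(derivative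 R)*(derivative (derivative (derivative R)))*S^2 + 2*(derivative f)^2*(derivative R)^2*(derivative (derivative R))*S^2 - (derivative f)^2*R*(derivative (derivative R))^2*S^2 - f*(derivative (derivative h))*R*(derivative R)^2*S^2 + f*(derivative (derivative h))*R^2*(derivative (derivative R))*S^2 + (-4)*f*(derivative h)*(derivative R)^3*S^2 + 6*f*(derivative h)*R*(derivative R)*(derivative (derivative R))*S^2 + (-2)*f*(derivative h)*R^2*(derivative (derivative (derivative R)))*S^2 + 4*f*h*(derivative R)^2*(derivative (derivative R))*S^2 + f*h*R*(derivative (derivative R))^2*S^2 + (-4)*f*h*R*(derivative R)*(derivative (derivative (derivative R)))*S^2 + (-2)*f*h*R*(derivative R)^2*(derivative S)^2 + 2*f*h*R*(derivative R)^2*S*(derivative (derivative S)) + f*h*R^2*(derivative (derivative (derivative (derivative R))))*S^2 + 2*f*h*R^2*(derivative (derivative R))*(derivative S)^2 + (-2)*f*h*R^2*(derivative (derivative R))*S*(derivative (derivative S)) - f*(derivative (derivative g))*(derivative R)^3*S^2 + f*(derivative (derivative g))*R*(derivative R)*(derivative (derivative R))*S^2 + 2*f*(derivative g)*(derivative R)^2*(derivative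 (derivative R))*S^2 + 2*f*(derivative g)*R*(derivative (derivative R))^2*S^2 + (-2)*f*(derivative g)*R*(derivative R)*(derivative (derivative (derivative R)))*S^2 + 4*f*g*(derivative R)*(derivative (derivative R))^2*S^2 + (-3)*f*g*(derivative R)^2*(derivative (derivative (derivative R)))*S^2 + (-2)*f*g*(derivative R)^3*(derivative S)^2 + 2*f*g*(derivative R)^3*S*(derivative (derivative S)) - f*g*R*(derivative (derivative R))*(derivative (derivative (derivative R)))*S^2 + f*g*R*(derivative R)*(derivative (derivative (derivative (derivative R))))*S^2 + 2*f*g*R*(derivative R)*(derivative (derivative R))*(derivative S)^2 + (-2)*f*g*R*(derivative R)*(derivative (derivative R))*S*(derivative (derivative S)) + (-2)*f*(derivative (derivative f))*(derivative R)^2*(derivative (derivative R))*S^2 + f*(derivative (derivative f))*R*(derivative (derivative R))^2*S^2 - f^2*(derivative (derivative R))^3*S^2 + 2*f^2*(derivative R)*(derivative (derivative R))*(derivative (derivative (derivative R)))*S^2 - f^2*(derivative R)^2*(derivative (derivative (derivative (derivative R))))*S^2 + (-2)*f^2*(derivative R)^2*(derivative (derivative R))*(derivative S)^2 + 2*f^2*(derivative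 R)^2*(derivative (derivative R))*S*(derivative (derivative S)) - f^2*R*(derivative (derivative (derivative R)))^2*S^2 + f^2*R*(derivative (derivative R))*(derivative (derivative (derivative (derivative R))))*S^2 + f^2*R*(derivative (derivative R))^2*(derivative S)^2 - f^2*R*(derivative (derivative R))^2*S*(derivative (derivative S))), ?_⟩
  linear_combination (S * P) * hT + ((derivative (derivative h))*R^2*S^2 + 4*(derivative h)*R*(derivative R)*S^2 + (-2)*(derivative h)*R^2*S*(derivative S) + 2*h*(derivative R)^2*S^2 + 2*h*R*(derivative (derivative R))*S^2 + (-4)*h*R*(derivative R)*S*(derivative S) + 2*h*R^2*(derivative S)^2 - h*R^2*S*(derivative (derivative S)) + (derivative (derivative g))*R*(derivative R)*S^2 + 2*(derivative g)*(derivative R)^2*S^2 + 2*(derivative g)*R*(derivative (derivative R))*S^2 + (-2)*(derivative g)*R*(derivative R)*S*(derivative S) + 3*g*(derivative R)*(derivative (derivative R))*S^2 + (-2)*g*(derivative R)^2*S*(derivative S) + g*R*(derivative (derivative (derivative R)))*S^2 + (-2)*g*R*(derivative (derivative R))*S*(derivative S) + 2*g*R*(derivative R)*(derivative S)^2 - g*R*(derivative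 R)*S*(derivative (derivative S)) - (derivative (derivative f))*(derivative R)^2*S^2 + (derivative (derivative f))*R*(derivative (derivative R))*S^2 + (-2)*(derivative f)*(derivative R)*(derivative (derivative R))*S^2 + 2*(derivative f)*(derivative R)^2*S*(derivative S) + 2*(derivative f)*R*(derivative (derivative (derivative R)))*S^2 + (-2)*(derivative f)*R*(derivative (derivative R))*S*(derivative S) - f*(derivative (derivative R))^2*S^2 + 2*f*(derivative R)*(derivative (derivative R))*S*(derivative S) + (-2)*f*(derivative R)^2*(derivative S)^2 + f*(derivative R)^2*S*(derivative (derivative S)) + f*R*(derivative (derivative (derivative (derivative R))))*S^2 + (-2)*f*R*(derivative (derivative (derivative R)))*S*(derivative S) + 2*f*R*(derivative (derivative R))*(derivative S)^2 - f*R*(derivative (derivative R))*S*(derivative (derivative S))) * hrec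
    - (S ^ 2 * derivative P + ((derivative h)*R^2*S + 2*h*R*(derivative R)*S - h*R^2*(derivative S) + (derivative g)*R*(derivative R)*S + g*(derivative R)^2*S + g*R*(derivative (derivative R))*S - g*R*(derivative R)*(derivative S) - (derivative f)*(derivative R)^2*S + (derivative f)*R*(derivative (derivative R))*S - f*(derivative R)*(derivative (derivative R))*S + f*(derivative R)^2*(derivative S) + f*R*(derivative (derivative (derivative R)))*S - f*R*(derivative (derivative R))*(derivative S))) * hU
end

section
/- Let f, g, h, P, R, S ∈ ℂ[x] satisfy S·P = f·(R·R'' − (R')²) + g·R·R' + h·R². Then S⁴·P·P' ≡ (R')⁴·( S²·(f·f' − f·g) − S·S'·f² ) + (R')³·R''·S²·f² modulo R, and S⁴·P² ≡ (R')⁴·S²·f² modulo R. -/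
open Polynomial

/-- If `S·P = f·(R·R'' − (R')²) + g·R·R' + h·R²`, then
`S⁴·P·P' ≡ (R')⁴·(S²·(f·f' − f·g) − S·S'·f²) + (R')³·R''·S²·f²` modulo `R`,
and `S⁴·P² ≡ (R')⁴·S²·f²` modulo `R`. -/
theorem stmt_6 (f g h P R S : Polynomial ℂ)
    (hrec : S * P = f * (R * derivative (derivative R) - (derivative R) ^ 2)
      + g * R * derivative R + h * R ^ 2) :
    (R ∣ S ^ 4 * P * derivative P -
        ((derivative R) ^ 4 * (S ^ 2 * (f * derivative f - f * g) - S * derivative S * f ^ 2)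
          + (derivative R) ^ 3 * derivative (derivative R) * S ^ 2 * f ^ 2)) ∧
    (R ∣ S ^ 4 * P ^ 2 - (derivative R) ^ 4 * S ^ 2 * f ^ 2) := by
  set R' := derivative R with hR'
  set R'' := derivative R' with hR''
  set u : Polynomial ℂ := f * R'' + g * R' + h * R with hu
  have k1 : S * P + f * R' ^ 2 = R * u := by
    rw [hu]; linear_combination hrec
  have k2 : derivative S * P + S * derivative P + derivative f * R' ^ 2
      + 2 * f * R' * R'' = R' * u + R * derivative u := by
    have h0 := congrArg derivative k1
    simp only [derivative_add, derivative_mul, derivative_pow, Nat.cast_ofNat, map_ofNat,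
      ← hR', ← hR''] at h0
    linear_combination h0
  constructor
  · refine ⟨S ^ 2 * (- f * R' ^ 2 * derivative u - derivative f * R' ^ 2 * u
      - 2 * f * R' * R'' * u + R' * u ^ 2 + R * u * derivative u - f * h * R' ^ 3)
      + S * derivative S * (2 * f * R' ^ 2 * u - R * u ^ 2), ?_⟩
    linear_combination (S ^ 2 * (S * P)) * k2
      + (S ^ 2 * (- derivative f * R' ^ 2 - 2 * f * R' * R'' + R' * u + R * derivative u)
        - S * derivative S * (S * P) - S * derivative S * (- f * R' ^ 2 + R * u)) * k1
  · exact ⟨u * (S ^ 2 * (S * P - f * R' ^ 2)),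
      by linear_combination (S ^ 2 * (S * P - f * R' ^ 2)) * k1⟩
end

section
/- Define the sequence (P_n) of rational functions in ℂ(x) by P_0 = 1, P_1 = x, and P_{n+1} = ( −4·(P_n·P_n'' − (P_n')²) + x·P_n² ) / P_{n−1} for n ≥ 1 (each P_{n−1} being nonzero). Assume that whenever two consecutive terms P_{n−1}, P_n are both polynomials, they are coprime in ℂ[x]. Then every P_n is a polynomial (the Yablonskii–Vorob'ev polynomials associated with Painlevé II). -/
open Polynomial

/-- The derivative of a rational function over `ℂ`, given by the quotient rule
applied to its reduced numerator and denominator. -/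
noncomputable def ratDeriv (q : RatFunc ℂ) : RatFunc ℂ :=
  algebraMap (Polynomial ℂ) (RatFunc ℂ)
      (derivative q.num * q.denom - q.num * derivative q.denom) /
    algebraMap (Polynomial ℂ) (RatFunc ℂ) (q.denom ^ 2)

/-- The Hirota-type bilinear operator for Painlevé II. -/
noncomputable def TT (q : Polynomial ℂ) : Polynomial ℂ :=
  -4 * (q * derivative (derivative q) - derivative q * derivative q) + X * (q * q)

lemma key_dvd (p u v w : Polynomial ℂ) (h4 : TT u = p * w) (h1 : TT p = u * v) :
    p ∣ u ^ 2 * TT v := by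
  have h2 := congrArg derivative h1
  have h3 := congrArg derivative h2
  simp only [derivative_add, derivative_neg, derivative_mul, derivative_sub, derivative_X,
    derivative_ofNat, derivative_zero, derivative_one, TT] at h1 h2 h3 h4
  refine ⟨-16 * (derivative p)^2 * (-4 * derivative (derivative (derivative (derivative p))) + 4 * derivative p + 2 * X * derivative (derivative p))
    - 16 * (derivative (derivative p))^2 * (-4 * derivative (derivative p) + X * p)
    + 8 * X * (derivative p)^2 * (-4 * derivative (derivative p) + X * p)
    + 32 * derivative p * derivative (derivative p) * (-4 * derivative (derivative (derivative p)) + p + 2 * X * derivative p)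
    + p * (-4 * (-4 * derivative (derivative p) + X * p) * (-4 * derivative (derivative (derivative (derivative p))) + 4 * derivative p + 2 * X * derivative (derivative p))
        + 2 * X * (-4 * derivative (derivative p) + X * p)^2
        + 4 * (-4 * derivative (derivative (derivative p)) + p + 2 * X * derivative p)^2)
    - w * v^2, ?_⟩
  simp only [TT]
  linear_combination (4 * (-4 * (p * derivative (derivative (derivative (derivative p))) - (derivative (derivative p))^2) + 4 * p * derivative p + 2 * X * (derivative p)^2 + 2 * X * p * derivative (derivative p))
      - 2 * X * (-4 * (p * derivative (derivative p) - (derivative p)^2) + X * p^2) - 2 * X * u * v) * h1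
    + (-4 * (-4 * (p * derivative (derivative (derivative p)) - derivative p * derivative (derivative p)) + p^2 + 2 * X * p * derivative p)
      - 4 * derivative u * v - 4 * u * derivative v) * h2
    + (4 * u * v) * h3
    + (-(v^2)) * h4

lemma ratDeriv_algebraMap (q : Polynomial ℂ) :
    ratDeriv (algebraMap (Polynomial ℂ) (RatFunc ℂ) q) =
      algebraMap (Polynomial ℂ) (RatFunc ℂ) (derivative q) := by
  unfold ratDeriv
  rw [RatFunc.num_algebraMap, RatFunc.denom_algebraMap]
  simp

/-- Painlevé II / Yablonskii–Vorob'ev: if `P₀ = 1`, `P₁ = x`, every `Pₙ ≠ 0`,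
`P_{n+1} = (−4·(Pₙ·Pₙ'' − (Pₙ')²) + x·Pₙ²) / P_{n−1}` for `n ≥ 1`, and any two consecutive
terms that are both polynomials are coprime in `ℂ[x]`, then every `Pₙ` is a polynomial. -/
theorem stmt_16 (P : ℕ → RatFunc ℂ)
    (hP0 : P 0 = 1)
    (hP1 : P 1 = algebraMap (Polynomial ℂ) (RatFunc ℂ) Polynomial.X)
    (hPne : ∀ n, P n ≠ 0)
    (hrec : ∀ n : ℕ, 1 ≤ n →
      P (n + 1) =
        (-4 * (P n * ratDeriv (ratDeriv (P n)) - (ratDeriv (P n)) ^ 2)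
          + algebraMap (Polynomial ℂ) (RatFunc ℂ) Polynomial.X * (P n) ^ 2) / P (n - 1))
    (hcop : ∀ n : ℕ, 1 ≤ n → ∀ q r : Polynomial ℂ,
      P (n - 1) = algebraMap (Polynomial ℂ) (RatFunc ℂ) q →
      P n = algebraMap (Polynomial ℂ) (RatFunc ℂ) r → IsCoprime q r) :
    ∀ n, ∃ q : Polynomial ℂ, P n = algebraMap (Polynomial ℂ) (RatFunc ℂ) q := by
  set φ := algebraMap (Polynomial ℂ) (RatFunc ℂ) with hφ
  have inj : Function.Injective φ := IsFractionRing.injective _ _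
  -- a general recurrence-unfolding lemma: if P n, P (n-1) are polynomials and the
  -- denominator divides, then P (n+1) is the quotient polynomial
  have hstep : ∀ n : ℕ, 1 ≤ n → ∀ a b : Polynomial ℂ, P (n - 1) = φ a → P n = φ b →
      P (n + 1) = φ (TT b) / φ a := by
    intro n hn a b ha hb
    rw [hrec n hn, ha, hb, ratDeriv_algebraMap, ratDeriv_algebraMap]
    congr 1
    rw [TT]
    simp only [map_add, map_mul, map_neg, map_sub, map_ofNat, map_pow]
    ring
  -- the main invariant
  have J : ∀ n : ℕ, ∃ a b c : Polynomial ℂ,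
      P n = φ a ∧ P (n + 1) = φ b ∧ P (n + 2) = φ c ∧ TT b = a * c ∧ b ∣ TT a := by
    intro n
    induction n with
    | zero =>
      refine ⟨1, X, X ^ 3 + 4, by simp [hP0, hφ], hP1, ?_, ?_, ?_⟩
      · have h2 := hstep 1 le_rfl 1 X (by simp [hP0, hφ]) hP1
        rw [h2]
        rw [show TT X = X ^ 3 + 4 by rw [TT]; simp; ring]
        simp
      · rw [TT]; simp; ring
      · rw [show TT 1 = X by rw [TT]; simp]
    | succ n ih =>
      obtain ⟨a, b, c, ha, hb, hc, hTb, hdvd⟩ := ih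
      have hcab : IsCoprime a b := hcop (n + 1) (by omega) a b (by simpa using ha) hb
      obtain ⟨w, hw⟩ := hdvd
      have hkey : b ∣ a ^ 2 * TT c := key_dvd b a c w hw hTb
      have hbc : b ∣ TT c := (hcab.symm.pow_right).dvd_of_dvd_mul_left hkey
      obtain ⟨e, he⟩ := hbc
      have hbne : b ≠ 0 := by
        intro h
        exact hPne (n + 1) (by rw [hb, h, map_zero])
      have hφb : φ b ≠ 0 := fun h => hbne (inj (by rw [h, map_zero]))
      have hP3 : P (n + 3) = φ e := by
        have := hstep (n + 2) (by omega) b c (by simpa using hb) hc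
        rw [show n + 2 + 1 = n + 3 by ring] at this
        rw [this, he, map_mul, mul_div_cancel_left₀ _ hφb]
      exact ⟨b, c, e, hb, hc, hP3, he, ⟨a, by rw [hTb]; ring⟩⟩
  intro n
  match n with
  | 0 => exact ⟨1, by simp [hP0, hφ]⟩
  | Nat.succ m =>
    obtain ⟨a, b, c, ha, hb, hc, _, _⟩ := J m
    exact ⟨b, hb⟩
end
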